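/- arXiv:1901.05400 — 2 statements merged into one kernel-verified Lean document; each statement's English description precedes it below -/
import Mathlib

section
/- Let α > −1, β > α+1, S ≥ 0 and P > 0 satisfy (β−1−α)·P > 2S(1+α). Then there exists ε₀ ∈ (0, 1/2], depending only on α, β, S, P, such that for every ε ∈ (0, ε₀), every p > 0 with p^β ≥ P, and all m, s ∈ ℝ with −p^α·m + p^β = s and |s| ≤ S, one has −((1−ε)p)^α·((1−ε)m) + ((1−ε)p)^β < s. -/
/-!
Write `t = 1 - ε`, `c = α + 1`, `e = β - α - 1`. Eliminating `m` through the equation, the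
rescaled expression equals `s - (1 - t^c) s - t^c (1 - t^e) p^β`, so it suffices that
`S (1 - t^c) < t^c (1 - t^e) p^β`. Both sides are of order `ε`: `1 - t^c ≤ c ε / t` and
`1 - t^e ≥ e ε t^e` (from `1 + x ≤ exp x` and `log t ≤ t - 1`), which reduces the claim to
`S c < e P t^(β+1)`. Bernoulli's inequality makes `t^(β+1) > 1/2` for small `ε`, and the
factor `2` in the hypothesis absorbs it.
-/

open Real

lemma mul_one_sub_rpow_le {t c : ℝ} (ht : 0 < t) (hc : 0 ≤ c) :
    t * (1 - t ^ c) ≤ c * (1 - t) := by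
  have hexp : 1 + c * log t ≤ t ^ c := by
    rw [rpow_def_of_pos ht, mul_comm c]
    linarith [add_one_le_exp (log t * c)]
  have hlog : 1 - t⁻¹ ≤ log t := one_sub_inv_le_log_of_pos ht
  have hinv : t * (1 - t⁻¹) = t - 1 := by field_simp
  nlinarith [mul_le_mul_of_nonneg_left hlog hc]

lemma mul_one_sub_mul_rpow_le_one_sub_rpow {t e : ℝ} (ht : 0 < t) (he : 0 ≤ e) :
    e * (1 - t) * t ^ e ≤ 1 - t ^ e := by
  have hexp : 1 - e * log t ≤ (t ^ e)⁻¹ := by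
    rw [rpow_def_of_pos ht, ← exp_neg]
    linarith [add_one_le_exp (-(log t * e))]
  have hlog : log t ≤ t - 1 := log_le_sub_one_of_pos ht
  have hpos : 0 < t ^ e := rpow_pos_of_pos ht e
  have h := mul_le_mul_of_nonneg_left hexp hpos.le
  rw [mul_inv_cancel₀ hpos.ne'] at h
  nlinarith [mul_le_mul_of_nonneg_left hlog he]

lemma mul_one_sub_rpow_lt_rpow_mul_one_sub_rpow_mul {t c e S P q : ℝ} (ht0 : 0 < t)
    (ht1 : t < 1) (hc : 0 ≤ c) (he : 0 ≤ e) (hS : 0 ≤ S) (hP : 0 ≤ P) (hq : P ≤ q)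
    (h : S * c < e * P * t ^ (c + e + 1)) :
    S * (1 - t ^ c) < t ^ c * (1 - t ^ e) * q := by
  have hε : 0 < 1 - t := by linarith
  have htc : 0 ≤ t ^ c := (rpow_pos_of_pos ht0 c).le
  have hte : 0 ≤ 1 - t ^ e := sub_nonneg.mpr (rpow_le_one ht0.le ht1.le he)
  have hsplit : t ^ (c + e + 1) = t * t ^ c * t ^ e := by
    rw [rpow_add_one ht0.ne', rpow_add ht0]; ring
  refine lt_of_mul_lt_mul_left ?_ ht0.le
  calc t * (S * (1 - t ^ c)) = S * (t * (1 - t ^ c)) := by ring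
    _ ≤ S * (c * (1 - t)) := mul_le_mul_of_nonneg_left (mul_one_sub_rpow_le ht0 hc) hS
    _ = S * c * (1 - t) := by ring
    _ < e * P * t ^ (c + e + 1) * (1 - t) := mul_lt_mul_of_pos_right h hε
    _ = t * t ^ c * (e * (1 - t) * t ^ e) * P := by rw [hsplit]; ring
    _ ≤ t * t ^ c * (1 - t ^ e) * P := by
        gcongr
        exact mul_one_sub_mul_rpow_le_one_sub_rpow ht0 he
    _ = t * (t ^ c * (1 - t ^ e) * P) := by ring
    _ ≤ t * (t ^ c * (1 - t ^ e) * q) := by gcongr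

lemma neg_mul_rpow_mul_add_mul_rpow {t p : ℝ} (ht : 0 < t) (hp : 0 < p) (α β m : ℝ) :
    -((t * p) ^ α) * (t * m) + (t * p) ^ β
      = t ^ (α + 1) * (-(p ^ α) * m) + t ^ (α + 1) * t ^ (β - (α + 1)) * p ^ β := by
  rw [mul_rpow ht.le hp.le, mul_rpow ht.le hp.le, ← rpow_add ht, add_sub_cancel,
    rpow_add_one ht.ne']
  ring

/-- pointwise computation showing that `(1-ε)u` is a strict subsolution
when the gradient is large. -/
theorem statement8 (α β S P : ℝ) (hα : -1 < α) (hβ : α + 1 < β)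
    (hS : 0 ≤ S) (hP : 0 < P)
    (hmain : 2 * S * (1 + α) < (β - 1 - α) * P) :
    ∃ ε₀ : ℝ, 0 < ε₀ ∧ ε₀ ≤ 1 / 2 ∧
      ∀ ε : ℝ, 0 < ε → ε < ε₀ →
      ∀ p : ℝ, 0 < p → P ≤ p ^ β →
      ∀ m s : ℝ, -(p ^ α) * m + p ^ β = s → |s| ≤ S →
        -(((1 - ε) * p) ^ α) * ((1 - ε) * m) + ((1 - ε) * p) ^ β < s := by
  have hβ1 : 1 ≤ β + 1 := by linarith
  refine ⟨(2 * (β + 1))⁻¹, by positivity, ?_, fun ε hε hεlt p hp hpP m s hsol hsS => ?_⟩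
  · rw [inv_le_comm₀ (by positivity) (by norm_num)]; linarith
  have hβε : (β + 1) * ε < 1 / 2 :=
    calc (β + 1) * ε < (β + 1) * (2 * (β + 1))⁻¹ := by gcongr
      _ = 1 / 2 := by field_simp
  have ht0 : 0 < 1 - ε := by nlinarith
  have hbernoulli : 1 - (β + 1) * ε ≤ (1 - ε) ^ (β + 1) := by
    simpa [sub_eq_add_neg, mul_neg] using
      one_add_mul_self_le_rpow_one_add (s := -ε) (by linarith) hβ1
  have hc : 0 ≤ α + 1 := by linarith
  have he : 0 < β - (α + 1) := by linarith
  have hsmall : S * (α + 1) < (β - (α + 1)) * P * (1 - ε) ^ (α + 1 + (β - (α + 1)) + 1) := by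
    rw [show α + 1 + (β - (α + 1)) + 1 = β + 1 by ring]
    nlinarith [mul_pos he hP]
  have hgap := mul_one_sub_rpow_lt_rpow_mul_one_sub_rpow_mul ht0 (by linarith) hc he.le hS
    hP.le hpP hsmall
  have hc1 : (1 - ε) ^ (α + 1) ≤ 1 := rpow_le_one ht0.le (by linarith) hc
  have hm : -(p ^ α) * m = s - p ^ β := by linarith
  rw [neg_mul_rpow_mul_add_mul_rpow ht0 hp, hm]
  nlinarith [neg_le_of_abs_le hsS]
end

section
/- Let N ≥ 1, α > −1 and α+1 < β < α+2, and set χ := (2+α−β)/(β−1−α) > 0. Let F be a function on the N×N real symmetric matrices which is positively homogeneous of degree one, let n ∈ ℝ^N be a unit vector with F(n ⊗ n) > 0, and set C := ((χ+1)·F(n ⊗ n))^{1/(β−α−1)} / χ. Then the function w(ζ) := C·(n·ζ)^{−χ}, defined on the half-space H = {ζ ∈ ℝ^N : n·ζ > 0}, is C² on H and satisfies −‖∇w(ζ)‖^α · F(D²w(ζ)) + ‖∇w(ζ)‖^β = 0 for every ζ ∈ H. -/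
/-!
Writing `t = n·ζ`, the chain rule gives `∇w = -Cχ t^{-χ-1} n` and
`D²w = Cχ(χ+1) t^{-χ-2} n ⊗ n`. With `g := |∇w| = Cχ t^{-χ-1}`, homogeneity of `F` gives
`F(D²w) = Cχ(χ+1) F(n ⊗ n) t^{-χ-2}`, and the choice of `C` (namely `(Cχ)^{β-α-1} = (χ+1) F(n ⊗ n)`)
together with `χ(β-α-1) = 2+α-β` turns this into `F(D²w) = g^{β-α}`, so the equation reads
`-g^α g^{β-α} + g^β = 0`.
-/

open Real

/-- `ℝ^N` with the Euclidean structure. -/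
abbrev Euc (N : ℕ) := EuclideanSpace ℝ (Fin N)

/-- The Hessian matrix of `u` at `x`: entries are second directional derivatives. -/
noncomputable def hessian {N : ℕ} (u : Euc N → ℝ) (x : Euc N) : Matrix (Fin N) (Fin N) ℝ :=
  Matrix.of fun i j =>
    fderiv ℝ (fun y => fderiv ℝ u y (EuclideanSpace.single j 1)) x (EuclideanSpace.single i 1)

/-- `F` is uniformly elliptic with constants `0 < a ≤ A`. -/
def UniformlyElliptic {N : ℕ} (a A : ℝ) (F : Matrix (Fin N) (Fin N) ℝ → ℝ) : Prop :=
  ∀ M P : Matrix (Fin N) (Fin N) ℝ, M.IsSymm → P.PosSemidef →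
    a * P.trace ≤ F (M + P) - F M ∧ F (M + P) - F M ≤ A * P.trace

/-- `F` is positively homogeneous of degree one. -/
def PosHomogeneousOne {N : ℕ} (F : Matrix (Fin N) (Fin N) ℝ → ℝ) : Prop :=
  ∀ t : ℝ, 0 < t → ∀ M, F (t • M) = t * F M

section InnerComp

variable {E : Type*} [NormedAddCommGroup E] [InnerProductSpace ℝ E] {f : ℝ → ℝ} {f' : ℝ}

theorem hasFDerivAt_comp_inner {n ζ : E} (hf : HasDerivAt f f' (inner ℝ n ζ)) :
    HasFDerivAt (fun y : E => f (inner ℝ n y)) (f' • innerSL ℝ n) ζ :=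
  hf.comp_hasFDerivAt ζ (innerSL ℝ n).hasFDerivAt

theorem gradient_comp_inner [CompleteSpace E] {n ζ : E} (hf : HasDerivAt f f' (inner ℝ n ζ)) :
    gradient (fun y : E => f (inner ℝ n y)) ζ = f' • n := by
  refine (hasGradientAt_iff_hasFDerivAt.mpr ?_).gradient
  rw [map_smul]
  exact hasFDerivAt_comp_inner hf

theorem contDiffOn_const_mul_inner_rpow (k : WithTop ℕ∞) (c p : ℝ) (n : E) :
    ContDiffOn ℝ k (fun y : E => c * inner ℝ n y ^ p) {y : E | 0 < inner ℝ n y} := by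
  intro ζ hζ
  have hf : ContDiffAt ℝ k (fun s : ℝ => c * s ^ p) (inner ℝ n ζ) :=
    contDiffAt_const.mul (contDiffAt_rpow_const_of_ne (ne_of_gt hζ))
  exact (hf.comp ζ (innerSL ℝ n).contDiff.contDiffAt).contDiffWithinAt

end InnerComp

theorem hessian_comp_inner {N : ℕ} {f f' : ℝ → ℝ} {f'' : ℝ} {n ζ : Euc N}
    (hf : ∀ᶠ s in nhds (inner ℝ n ζ), HasDerivAt f (f' s) s)
    (hf' : HasDerivAt f' f'' (inner ℝ n ζ)) :
    hessian (fun y : Euc N => f (inner ℝ n y)) ζ = f'' • Matrix.of fun i j => n i * n j := by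
  have hf_near : ∀ᶠ y in nhds ζ, HasDerivAt f (f' (inner ℝ n y)) (inner ℝ n y) :=
    (innerSL ℝ n).continuous.continuousAt.eventually hf
  ext i j
  have hpartial : (fun y => fderiv ℝ (fun y : Euc N => f (inner ℝ n y)) y
      (EuclideanSpace.single j 1)) =ᶠ[nhds ζ] fun y => f' (inner ℝ n y) * n j := by
    filter_upwards [hf_near] with y hy
    simp [(hasFDerivAt_comp_inner hy).fderiv, EuclideanSpace.inner_single_right, mul_comm]
  have hf'_scaled : HasDerivAt (fun s => f' s * n j) (f'' * n j) (inner ℝ n ζ) :=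
    hf'.mul_const (n j)
  simp only [hessian, Matrix.of_apply, Matrix.smul_apply, smul_eq_mul, hpartial.fderiv_eq,
    (hasFDerivAt_comp_inner hf'_scaled).fderiv, smul_apply,
    innerSL_apply_apply, EuclideanSpace.inner_single_right, RCLike.conj_to_real]
  ring

theorem hasDerivAt_const_mul_rpow (c p : ℝ) {s : ℝ} (hs : s ≠ 0) :
    HasDerivAt (fun s => c * s ^ p) (c * p * s ^ (p - 1)) s := by
  simpa only [mul_assoc] using (hasDerivAt_rpow_const (p := p) (Or.inl hs)).const_mul c

theorem mul_rpow_neg_sub_one_rpow {K t χ α β : ℝ} (hK : 0 < K) (ht : 0 < t)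
    (hχ : χ * (β - 1 - α) = 2 + α - β) :
    (K * t ^ (-χ - 1)) ^ (β - α) = K * K ^ (β - α - 1) * t ^ (-χ - 2) := by
  have hKpow : K ^ (β - α) = K * K ^ (β - α - 1) := by
    rw [mul_comm, ← rpow_add_one hK.ne']
    ring_nf
  rw [mul_rpow hK.le (rpow_nonneg ht.le _), ← rpow_mul ht.le, hKpow]
  congr 2
  linarith

theorem statement13_general (N : ℕ) (α β χ : ℝ)
    (hβ1 : α + 1 < β) (hβ2 : β < α + 2)
    (hχ : χ = (2 + α - β) / (β - 1 - α))
    (F : Matrix (Fin N) (Fin N) ℝ → ℝ) (hFh : PosHomogeneousOne F)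
    (n : Euc N) (hn : ‖n‖ = 1)
    (hFn : 0 < F (Matrix.of fun i j => n i * n j))
    (C : ℝ) (hC : C = ((χ + 1) * F (Matrix.of fun i j => n i * n j))
        ^ (1 / (β - α - 1)) / χ) :
    ContDiffOn ℝ 2 (fun ζ : Euc N => C * (inner ℝ n ζ : ℝ) ^ (-χ))
        {ζ : Euc N | 0 < (inner ℝ n ζ : ℝ)} ∧
      ∀ ζ : Euc N, 0 < (inner ℝ n ζ : ℝ) →
        -‖gradient (fun ζ : Euc N => C * (inner ℝ n ζ : ℝ) ^ (-χ)) ζ‖ ^ α *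
            F (hessian (fun ζ : Euc N => C * (inner ℝ n ζ : ℝ) ^ (-χ)) ζ) +
          ‖gradient (fun ζ : Euc N => C * (inner ℝ n ζ : ℝ) ^ (-χ)) ζ‖ ^ β = 0 := by
  set F₀ := F (Matrix.of fun i j => n i * n j)
  have hχ_pos : 0 < χ := hχ ▸ div_pos (by linarith) (by linarith)
  have hχ_scaling : χ * (β - 1 - α) = 2 + α - β := by
    rw [hχ]; field_simp [show β - 1 - α ≠ 0 by linarith]
  have hbase : 0 < (χ + 1) * F₀ := mul_pos (by linarith) hFn
  have hC_pos : 0 < C := hC ▸ div_pos (rpow_pos_of_pos hbase _) hχ_pos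
  have hCχ_pow : (C * χ) ^ (β - α - 1) = (χ + 1) * F₀ := by
    rw [hC, div_mul_cancel₀ _ hχ_pos.ne', ← rpow_mul hbase.le, one_div,
      inv_mul_cancel₀ (by linarith), rpow_one]
  refine ⟨contDiffOn_const_mul_inner_rpow 2 C (-χ) n, fun ζ hζ => ?_⟩
  set t := (inner ℝ n ζ : ℝ)
  have hf : ∀ᶠ s in nhds t, HasDerivAt (fun s => C * s ^ (-χ)) (C * -χ * s ^ (-χ - 1)) s :=
    (eventually_gt_nhds hζ).mono fun s hs => hasDerivAt_const_mul_rpow C (-χ) (ne_of_gt hs)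
  have hf' : HasDerivAt (fun s => C * -χ * s ^ (-χ - 1))
      (C * -χ * (-χ - 1) * t ^ (-χ - 1 - 1)) t :=
    hasDerivAt_const_mul_rpow (C * -χ) (-χ - 1) (ne_of_gt hζ)
  have hnorm_grad : ‖gradient (fun ζ : Euc N => C * (inner ℝ n ζ : ℝ) ^ (-χ)) ζ‖
      = C * χ * t ^ (-χ - 1) := by
    rw [gradient_comp_inner hf.self_of_nhds, norm_smul, hn, mul_one, norm_eq_abs,
      abs_of_nonpos (by nlinarith [rpow_pos_of_pos hζ (-χ - 1), mul_pos hC_pos hχ_pos])]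
    ring
  have hF_hess : F (hessian (fun ζ : Euc N => C * (inner ℝ n ζ : ℝ) ^ (-χ)) ζ)
      = (C * χ * t ^ (-χ - 1)) ^ (β - α) := by
    have hcoeff : C * -χ * (-χ - 1) * t ^ (-χ - 1 - 1) = C * χ * (χ + 1) * t ^ (-χ - 2) := by
      ring_nf
    rw [hessian_comp_inner hf hf', hcoeff, hFh _ (by positivity),
      mul_rpow_neg_sub_one_rpow (mul_pos hC_pos hχ_pos) hζ hχ_scaling, hCχ_pow]
    ring
  have hg_pos : 0 < C * χ * t ^ (-χ - 1) := by positivity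
  rw [hnorm_grad, hF_hess, neg_mul, ← rpow_add hg_pos, add_sub_cancel, neg_add_cancel]

/-- the model boundary blow-up profile `w(ζ) = C (n·ζ)^{-χ}` solves
`-|∇w|^α F(D²w) + |∇w|^β = 0` in the half-space `{n·ζ > 0}`. -/
theorem statement13 (N : ℕ) (hN : 1 ≤ N) (α β χ : ℝ)
    (hα : -1 < α) (hβ1 : α + 1 < β) (hβ2 : β < α + 2)
    (hχ : χ = (2 + α - β) / (β - 1 - α))
    (F : Matrix (Fin N) (Fin N) ℝ → ℝ) (hFh : PosHomogeneousOne F)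
    (n : Euc N) (hn : ‖n‖ = 1)
    (hFn : 0 < F (Matrix.of fun i j => n i * n j))
    (C : ℝ) (hC : C = ((χ + 1) * F (Matrix.of fun i j => n i * n j))
        ^ (1 / (β - α - 1)) / χ) :
    ContDiffOn ℝ 2 (fun ζ : Euc N => C * (inner ℝ n ζ : ℝ) ^ (-χ))
        {ζ : Euc N | 0 < (inner ℝ n ζ : ℝ)} ∧
      ∀ ζ : Euc N, 0 < (inner ℝ n ζ : ℝ) →
        -‖gradient (fun ζ : Euc N => C * (inner ℝ n ζ : ℝ) ^ (-χ)) ζ‖ ^ α *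
            F (hessian (fun ζ : Euc N => C * (inner ℝ n ζ : ℝ) ^ (-χ)) ζ) +
          ‖gradient (fun ζ : Euc N => C * (inner ℝ n ζ : ℝ) ^ (-χ)) ζ‖ ^ β = 0 :=
  statement13_general N α β χ hβ1 hβ2 hχ F hFh n hn hFn C hC
end
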